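/- arXiv:1510.02975 — 5 statements merged into one kernel-verified Lean document; each statement's English description precedes it below -/
import Mathlib

section
/- Let f be twice continuously differentiable on [x₀, x₁] with h = x₁ - x₀, and let p be the linear interpolant of f at x₀ and x₁, i.e., p(x) = f(x₀)(1 - (x-x₀)/h) + f(x₁)(x-x₀)/h. Then the squared L² error satisfies ∫_{x₀}^{x₁} (f(x) - p(x))² dx = (h⁵/120)·(f''(η))² for some η ∈ (x₀, x₁). -/
/-!
Rolle's theorem applied twice gives the pointwise remainder
`f x - p x = f'' ξₓ / 2 * (x - x₀) * (x - x₁)`, so the squared error is `(f'' ξₓ / 2)² * w x`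
with the weight `w x = ((x - x₀) * (x - x₁))²`, positive inside the interval and of integral `h⁵ / 30`.
The values `(f'' ξ / 2)²` form an interval (Darboux), and a weighted mean of values taken in an
interval, against a positive weight, is again in that interval.
-/

open MeasureTheory Set intervalIntegral

theorem exists_hasDerivAt_hasDerivAt_eq_zero {g g' g'' : ℝ → ℝ} {a b c : ℝ}
    (hac : a < c) (hcb : c < b) (hgc : ContinuousOn g (Icc a b)) (hac_eq : g a = g c)
    (hcb_eq : g c = g b) (hg : ∀ x ∈ Ioo a b, HasDerivAt g (g' x) x)
    (hg' : ∀ x ∈ Ioo a b, HasDerivAt g' (g'' x) x) :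
    ∃ ξ ∈ Ioo a b, g'' ξ = 0 := by
  obtain ⟨ξ₁, hξ₁, hg'ξ₁⟩ := exists_hasDerivAt_eq_zero hac
    (hgc.mono (Icc_subset_Icc_right hcb.le)) hac_eq
    fun x hx ↦ hg x ⟨hx.1, hx.2.trans hcb⟩
  obtain ⟨ξ₂, hξ₂, hg'ξ₂⟩ := exists_hasDerivAt_eq_zero hcb
    (hgc.mono (Icc_subset_Icc_left hac.le)) hcb_eq
    fun x hx ↦ hg x ⟨hac.trans hx.1, hx.2⟩
  have hsub : Icc ξ₁ ξ₂ ⊆ Ioo a b := Icc_subset_Ioo hξ₁.1 hξ₂.2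
  obtain ⟨ξ, hξ, hg''ξ⟩ := exists_hasDerivAt_eq_zero (hξ₁.2.trans hξ₂.1)
    (fun x hx ↦ (hg' x (hsub hx)).continuousAt.continuousWithinAt) (hg'ξ₁.trans hg'ξ₂.symm)
    fun x hx ↦ hg' x (hsub (Ioo_subset_Icc_self hx))
  exact ⟨ξ, hsub (Ioo_subset_Icc_self hξ), hg''ξ⟩

theorem exists_eq_mul_sub_mul_sub_of_eq_zero_of_eq_zero {g g' g'' : ℝ → ℝ} {a b c : ℝ}
    (hc : c ∈ Ioo a b) (hgc : ContinuousOn g (Icc a b)) (hga : g a = 0) (hgb : g b = 0)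
    (hg : ∀ x ∈ Ioo a b, HasDerivAt g (g' x) x)
    (hg' : ∀ x ∈ Ioo a b, HasDerivAt g' (g'' x) x) :
    ∃ ξ ∈ Ioo a b, g c = g'' ξ / 2 * ((c - a) * (c - b)) := by
  have hq : (c - a) * (c - b) ≠ 0 := mul_ne_zero (sub_pos.2 hc.1).ne' (sub_neg.2 hc.2).ne
  set K := g c / ((c - a) * (c - b))
  -- `K` is chosen so that `φ` vanishes at `c` as well as at `a` and `b`.
  let φ x := g x - K * ((x - a) * (x - b))
  have hφ (x) (hx : x ∈ Ioo a b) : HasDerivAt φ (g' x - K * (2 * x - a - b)) x :=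
    ((hg x hx).sub ((((hasDerivAt_id' x).sub_const a).mul
      ((hasDerivAt_id' x).sub_const b)).const_mul K)).congr_deriv (by ring)
  have hφ' (x) (hx : x ∈ Ioo a b) :
      HasDerivAt (fun x ↦ g' x - K * (2 * x - a - b)) (g'' x - K * 2) x :=
    ((hg' x hx).sub (((((hasDerivAt_id' x).const_mul 2).sub_const a).sub_const b).const_mul
      K)).congr_deriv (by ring)
  have hKq : K * ((c - a) * (c - b)) = g c := div_mul_cancel₀ _ hq
  obtain ⟨ξ, hξ, hφ''ξ⟩ := exists_hasDerivAt_hasDerivAt_eq_zero hc.1 hc.2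
    (hgc.sub (by fun_prop)) (by simp [hga, hKq]) (by simp [hgb, hKq]) hφ hφ'
  refine ⟨ξ, hξ, ?_⟩
  rw [show g'' ξ = 2 * K by linarith, ← hKq]
  ring

theorem integral_sq_mul_sub_mul_sub (a b : ℝ) :
    ∫ x in a..b, ((x - a) * (x - b)) ^ 2 = (b - a) ^ 5 / 30 := by
  let F x := (x - a) ^ 5 / 5 - (b - a) * (x - a) ^ 4 / 2 + (b - a) ^ 2 * (x - a) ^ 3 / 3
  have hF (x) : HasDerivAt F (((x - a) * (x - b)) ^ 2) x := by
    have hu := (hasDerivAt_id' x).sub_const a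
    exact ((((hu.pow 5).div_const 5).sub (((hu.pow 4).const_mul (b - a)).div_const 2)).add
      (((hu.pow 3).const_mul ((b - a) ^ 2)).div_const 3)).congr_deriv (by push_cast; ring)
  rw [integral_eq_sub_of_hasDerivAt (fun x _ ↦ hF x) ((by fun_prop : Continuous fun x ↦
    ((x - a) * (x - b)) ^ 2).intervalIntegrable a b)]
  simp only [F]; ring

theorem Set.OrdConnected.exists_integral_eq_mul_integral {S : Set ℝ} (hS : S.OrdConnected)
    {E w : ℝ → ℝ} {a b : ℝ} (hab : a < b) (hE : IntervalIntegrable E volume a b)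
    (hw : IntervalIntegrable w volume a b) (hw_pos : ∀ x ∈ Ioo a b, 0 < w x)
    (hEw : ∀ x ∈ Ioo a b, ∃ s ∈ S, E x = s * w x) :
    ∃ s ∈ S, ∫ x in a..b, E x = s * ∫ x in a..b, w x := by
  have hI : 0 < ∫ x in a..b, w x := intervalIntegral_pos_of_pos_on hw hw_pos hab
  set c := (∫ x in a..b, E x) / ∫ x in a..b, w x
  have hEc : ∫ x in a..b, E x = c * ∫ x in a..b, w x := (div_mul_cancel₀ _ hI.ne').symm
  refine ⟨c, ?_, hEc⟩
  by_contra hcS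
  have hside : (∀ s ∈ S, s < c) ∨ ∀ s ∈ S, c < s := by
    by_contra! h
    obtain ⟨⟨s₁, hs₁, hcs₁⟩, ⟨s₂, hs₂, hs₂c⟩⟩ := h
    exact hcS (hS.out hs₂ hs₁ ⟨hs₂c, hcs₁⟩)
  rcases hside with hlt | hgt
  · have hpos := intervalIntegral_pos_of_pos_on (hw.const_mul c |>.sub hE) (fun x hx ↦ by
      obtain ⟨s, hs, hEx⟩ := hEw x hx
      rw [hEx, ← sub_mul]
      exact mul_pos (sub_pos.2 (hlt s hs)) (hw_pos x hx)) hab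
    rw [integral_sub (hw.const_mul c) hE, intervalIntegral.integral_const_mul] at hpos
    linarith
  · have hpos := intervalIntegral_pos_of_pos_on (hE.sub (hw.const_mul c)) (fun x hx ↦ by
      obtain ⟨s, hs, hEx⟩ := hEw x hx
      rw [hEx, ← sub_mul]
      exact mul_pos (sub_pos.2 (hgt s hs)) (hw_pos x hx)) hab
    rw [integral_sub hE (hw.const_mul c), intervalIntegral.integral_const_mul] at hpos
    linarith

noncomputable def linearInterpolant (f : ℝ → ℝ) (x₀ x₁ x : ℝ) : ℝ :=
  f x₀ * (1 - (x - x₀) / (x₁ - x₀)) + f x₁ * ((x - x₀) / (x₁ - x₀))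

section linearInterpolant

variable (f : ℝ → ℝ) (x₀ x₁ : ℝ)

theorem linearInterpolant_left : linearInterpolant f x₀ x₁ x₀ = f x₀ := by
  simp [linearInterpolant]

theorem linearInterpolant_right (h : x₀ ≠ x₁) : linearInterpolant f x₀ x₁ x₁ = f x₁ := by
  simp [linearInterpolant, div_self (sub_ne_zero.2 h.symm)]

theorem continuous_linearInterpolant : Continuous (linearInterpolant f x₀ x₁) := by
  unfold linearInterpolant
  fun_prop

theorem hasDerivAt_linearInterpolant (x : ℝ) :
    HasDerivAt (linearInterpolant f x₀ x₁) ((f x₁ - f x₀) / (x₁ - x₀)) x := by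
  have hu := ((hasDerivAt_id' x).sub_const x₀).div_const (x₁ - x₀)
  exact (((hasDerivAt_const x (1 : ℝ)).sub hu).const_mul (f x₀) |>.add (hu.const_mul (f x₁)))
    |>.congr_deriv (by ring)

end linearInterpolant

theorem exists_sub_linearInterpolant_eq {f f' f'' : ℝ → ℝ} {x₀ x₁ c : ℝ}
    (hf' : ∀ x ∈ Icc x₀ x₁, HasDerivWithinAt f (f' x) (Icc x₀ x₁) x)
    (hf'' : ∀ x ∈ Icc x₀ x₁, HasDerivWithinAt f' (f'' x) (Icc x₀ x₁) x) (hc : c ∈ Ioo x₀ x₁) :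
    ∃ ξ ∈ Ioo x₀ x₁, f c - linearInterpolant f x₀ x₁ c = f'' ξ / 2 * ((c - x₀) * (c - x₁)) :=
  exists_eq_mul_sub_mul_sub_of_eq_zero_of_eq_zero
    (g := fun x ↦ f x - linearInterpolant f x₀ x₁ x) hc
    (fun x hx ↦ (hf' x hx).continuousWithinAt.sub
      (continuous_linearInterpolant f x₀ x₁).continuousWithinAt)
    (by simp only [linearInterpolant_left, sub_self])
    (by simp only [linearInterpolant_right f x₀ x₁ (hc.1.trans hc.2).ne, sub_self])
    (fun x hx ↦ ((hf' x (Ioo_subset_Icc_self hx)).hasDerivAt (Icc_mem_nhds hx.1 hx.2)).sub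
      (hasDerivAt_linearInterpolant f x₀ x₁ x))
    (fun x hx ↦ ((hf'' x (Ioo_subset_Icc_self hx)).hasDerivAt (Icc_mem_nhds hx.1 hx.2)).sub_const
      ((f x₁ - f x₀) / (x₁ - x₀)))

theorem linear_interpolant_sq_error_general
    (f f' f'' : ℝ → ℝ) (x₀ x₁ : ℝ) (hx : x₀ < x₁)
    (hf' : ∀ x ∈ Set.Icc x₀ x₁, HasDerivWithinAt f (f' x) (Set.Icc x₀ x₁) x)
    (hf'' : ∀ x ∈ Set.Icc x₀ x₁, HasDerivWithinAt f' (f'' x) (Set.Icc x₀ x₁) x) :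
    ∃ η ∈ Set.Ioo x₀ x₁,
      (∫ x in x₀..x₁,
        (f x - (f x₀ * (1 - (x - x₀) / (x₁ - x₀)) + f x₁ * ((x - x₀) / (x₁ - x₀))))^2)
      = (x₁ - x₀)^5 / 120 * (f'' η)^2 := by
  -- By Darboux, `f''` maps `(x₀, x₁)` onto an interval.
  have hS : ((fun y ↦ (y / 2) ^ 2) '' (f'' '' Ioo x₀ x₁)).OrdConnected :=
    ((ordConnected_Ioo.image_hasDerivWithinAt fun x hx ↦
      (hf'' x (Ioo_subset_Icc_self hx)).mono Ioo_subset_Icc_self).isPreconnected.image _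
      (by fun_prop)).ordConnected
  have hf : ContinuousOn f (Icc x₀ x₁) := fun x hx ↦ (hf' x hx).continuousWithinAt
  have hE : ContinuousOn (fun x ↦ (f x - linearInterpolant f x₀ x₁ x) ^ 2) (Icc x₀ x₁) :=
    (hf.sub (continuous_linearInterpolant f x₀ x₁).continuousOn).pow 2
  obtain ⟨_, ⟨_, ⟨η, hη, rfl⟩, rfl⟩, hint⟩ := hS.exists_integral_eq_mul_integral hx
    (hE.intervalIntegrable_of_Icc hx.le)
    ((by fun_prop : Continuous fun x ↦ ((x - x₀) * (x - x₁)) ^ 2).intervalIntegrable _ _)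
    (fun x hx ↦ sq_pos_of_neg (mul_neg_of_pos_of_neg (sub_pos.2 hx.1) (sub_neg.2 hx.2)))
    fun x hx ↦ by
      obtain ⟨ξ, hξ, hfx⟩ := exists_sub_linearInterpolant_eq hf' hf'' hx
      exact ⟨_, mem_image_of_mem _ (mem_image_of_mem _ hξ), by rw [hfx]; ring⟩
  refine ⟨η, hη, hint.trans ?_⟩
  rw [integral_sq_mul_sub_mul_sub]
  ring

/-- exact L² interpolation error formula (h⁵/120)·(f''(η))². -/
theorem linear_interpolant_sq_error
    (f f' f'' : ℝ → ℝ) (x₀ x₁ : ℝ) (hx : x₀ < x₁)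
    (hf' : ∀ x ∈ Set.Icc x₀ x₁, HasDerivWithinAt f (f' x) (Set.Icc x₀ x₁) x)
    (hf'' : ∀ x ∈ Set.Icc x₀ x₁, HasDerivWithinAt f' (f'' x) (Set.Icc x₀ x₁) x)
    (hf''c : ContinuousOn f'' (Set.Icc x₀ x₁)) :
    ∃ η ∈ Set.Ioo x₀ x₁,
      (∫ x in x₀..x₁,
        (f x - (f x₀ * (1 - (x - x₀) / (x₁ - x₀)) + f x₁ * ((x - x₀) / (x₁ - x₀))))^2)
      = (x₁ - x₀)^5 / 120 * (f'' η)^2 :=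
  linear_interpolant_sq_error_general f f' f'' x₀ x₁ hx hf' hf''
end

section
/- Let f be C² on I = [x₀, x₁] with h = x₁ - x₀, and for real parameters d₀, d₁ consider the segment ℓ(x) = (f(x₀)+d₀)(1 - t(x)) + (f(x₁)+d₁)·t(x) with t(x) = (x - x₀)/h. Then the minimum over (d₀, d₁) of ∫_I (f - ℓ)² dx equals (h⁵/120)(f''(η))² − (h⁵/144)((f''(η₀))² + (f''(η₁))² − f''(η₀)f''(η₁)) for some η, η₀, η₁ ∈ (x₀, x₁). -/
/-!
Write `r = f - ℓ` for the error of the chord `ℓ` through `(x₀, f x₀)` and `(x₁, f x₁)`, and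
`t = (x - x₀) / h`. Applying Rolle's theorem twice gives `r x = -(h² / 2) f''(ξₓ) t (1 - t)`.
Against the positive weights `t² (1 - t)²`, `t (1 - t)²` and `t² (1 - t)` a mean value argument
(which needs only the intermediate value theorem for `f''`, not any regularity of `x ↦ ξₓ`) turns
`∫ r²`, `a = ∫ r (1 - t)` and `b = ∫ r t` into `h⁵/120 f''(η)²`, `-h³/24 f''(η₀)` and
`-h³/24 f''(η₁)`. The error of the segment with offsets `d₀, d₁` is the quadratic
`∫ r² - 2 (d₀ a + d₁ b) + h/3 (d₀² + d₀ d₁ + d₁²)`, whose minimum is `∫ r² - 4/h (a² - a b + b²)`.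
-/

open MeasureTheory Set intervalIntegral

theorem integral_zero_one_quartic (c₀ c₁ c₂ c₃ c₄ : ℝ) :
    ∫ t in (0 : ℝ)..1, (c₀ + c₁ * t + c₂ * t ^ 2 + c₃ * t ^ 3 + c₄ * t ^ 4) =
      c₀ + c₁ / 2 + c₂ / 3 + c₃ / 4 + c₄ / 5 := by
  simp (disch := apply Continuous.intervalIntegrable; fun_prop) only
    [intervalIntegral.integral_add, intervalIntegral.integral_const_mul, integral_pow,
      intervalIntegral.integral_const]
  rw [intervalIntegral.integral_const_mul, integral_id]
  norm_num
  ring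

theorem mul_integral_lt_integral_of_forall_lt {a b c : ℝ} {g F w : ℝ → ℝ} (hab : a < b)
    (hF : IntervalIntegrable F volume a b) (hw : IntervalIntegrable w volume a b)
    (hw_pos : ∀ x ∈ Ioo a b, 0 < w x) (hFgw : ∀ x ∈ Ioo a b, ∃ ξ ∈ Ioo a b, F x = g ξ * w x)
    (hc : ∀ ξ ∈ Ioo a b, c < g ξ) :
    c * ∫ x in a..b, w x < ∫ x in a..b, F x := by
  have hpos : 0 < ∫ x in a..b, (F x - c * w x) := by
    refine intervalIntegral_pos_of_pos_on (hF.sub (hw.const_mul c)) (fun x hx => ?_) hab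
    obtain ⟨ξ, hξ, hFx⟩ := hFgw x hx
    rw [hFx, ← sub_mul]
    exact mul_pos (sub_pos.2 (hc ξ hξ)) (hw_pos x hx)
  rw [intervalIntegral.integral_sub hF (hw.const_mul c), intervalIntegral.integral_const_mul]
    at hpos
  linarith

theorem exists_mem_Ioo_integral_eq_mul_integral {a b : ℝ} {g F w : ℝ → ℝ} (hab : a < b)
    (hg : ContinuousOn g (Ioo a b)) (hF : IntervalIntegrable F volume a b)
    (hw : IntervalIntegrable w volume a b) (hw_pos : ∀ x ∈ Ioo a b, 0 < w x)
    (hFgw : ∀ x ∈ Ioo a b, ∃ ξ ∈ Ioo a b, F x = g ξ * w x) :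
    ∃ η ∈ Ioo a b, ∫ x in a..b, F x = g η * ∫ x in a..b, w x := by
  set c := (∫ x in a..b, F x) / ∫ x in a..b, w x
  have hc : c * ∫ x in a..b, w x = ∫ x in a..b, F x :=
    div_mul_cancel₀ _ (intervalIntegral_pos_of_pos_on hw hw_pos hab).ne'
  suffices ∃ η ∈ Ioo a b, g η = c by
    obtain ⟨η, hη, hgη⟩ := this
    exact ⟨η, hη, by rw [hgη, hc]⟩
  by_contra! hne
  have hside : (∀ ξ ∈ Ioo a b, c < g ξ) ∨ ∀ ξ ∈ Ioo a b, g ξ < c := by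
    by_contra! h
    obtain ⟨⟨ξ₁, hξ₁, h₁⟩, ξ₂, hξ₂, h₂⟩ := h
    obtain ⟨η, hη, hgη⟩ := isPreconnected_Ioo.intermediate_value hξ₁ hξ₂ hg ⟨h₁, h₂⟩
    exact hne η hη hgη
  rcases hside with hlt | hgt
  · linarith [mul_integral_lt_integral_of_forall_lt hab hF hw hw_pos hFgw hlt]
  · have := mul_integral_lt_integral_of_forall_lt (g := -g) hab hF.neg hw hw_pos
      (fun x hx => (hFgw x hx).imp fun ξ ⟨hξ, h⟩ => ⟨hξ, by simp [h]⟩)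
      (fun ξ hξ => neg_lt_neg (hgt ξ hξ))
    rw [Pi.neg_def, intervalIntegral.integral_neg] at this
    linarith

theorem exists_hasDerivAt_eq_zero_of_three_eq {g g' g'' : ℝ → ℝ} {a b c : ℝ} (hac : a < c)
    (hcb : c < b) (hg : ContinuousOn g (Icc a b)) (hg' : ∀ x ∈ Ioo a b, HasDerivAt g (g' x) x)
    (hg'' : ∀ x ∈ Ioo a b, HasDerivAt g' (g'' x) x) (hgac : g a = g c) (hgcb : g c = g b) :
    ∃ ξ ∈ Ioo a b, g'' ξ = 0 := by
  obtain ⟨ζ₁, hζ₁, h₁⟩ := exists_hasDerivAt_eq_zero hac (hg.mono (Icc_subset_Icc_right hcb.le))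
    hgac fun x hx => hg' x ⟨hx.1, hx.2.trans hcb⟩
  obtain ⟨ζ₂, hζ₂, h₂⟩ := exists_hasDerivAt_eq_zero hcb (hg.mono (Icc_subset_Icc_left hac.le))
    hgcb fun x hx => hg' x ⟨hac.trans hx.1, hx.2⟩
  have hsub : Icc ζ₁ ζ₂ ⊆ Ioo a b := Icc_subset_Ioo hζ₁.1 hζ₂.2
  obtain ⟨ξ, hξ, h⟩ := exists_hasDerivAt_eq_zero (hζ₁.2.trans hζ₂.1)
    (fun x hx => (hg'' x (hsub hx)).continuousAt.continuousWithinAt) (h₁.trans h₂.symm)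
    fun x hx => hg'' x (hsub (Ioo_subset_Icc_self hx))
  exact ⟨ξ, hsub (Ioo_subset_Icc_self hξ), h⟩

theorem isLeast_quadratic {h : ℝ} (hh : 0 < h) (C a b : ℝ) :
    IsLeast {e | ∃ d₀ d₁ : ℝ, e = C - 2 * (d₀ * a + d₁ * b) + h / 3 * (d₀ ^ 2 + d₀ * d₁ + d₁ ^ 2)}
      (C - 4 / h * (a ^ 2 - a * b + b ^ 2)) := by
  -- the minimiser solves the normal equations `h / 6 * (2 * p + q) = a`, `h / 6 * (p + 2 * q) = b`
  set p := (4 * a - 2 * b) / h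
  set q := (4 * b - 2 * a) / h
  refine ⟨⟨p, q, by simp only [p, q]; field_simp; ring⟩, ?_⟩
  rintro _ ⟨d₀, d₁, rfl⟩
  have hgap : C - 2 * (d₀ * a + d₁ * b) + h / 3 * (d₀ ^ 2 + d₀ * d₁ + d₁ ^ 2)
      - (C - 4 / h * (a ^ 2 - a * b + b ^ 2))
      = h / 6 * ((d₀ - p + (d₁ - q)) ^ 2 + (d₀ - p) ^ 2 + (d₁ - q) ^ 2) := by
    simp only [p, q]; field_simp; ring
  have : 0 ≤ h / 6 * ((d₀ - p + (d₁ - q)) ^ 2 + (d₀ - p) ^ 2 + (d₁ - q) ^ 2) := by positivity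
  linarith

noncomputable def affineInterp (x₀ x₁ y₀ y₁ x : ℝ) : ℝ :=
  y₀ * (1 - (x - x₀) / (x₁ - x₀)) + y₁ * ((x - x₀) / (x₁ - x₀))

section AffineInterp

variable {x₀ x₁ : ℝ}

theorem integral_comp_normalize (h : x₀ ≠ x₁) (P : ℝ → ℝ) :
    ∫ x in x₀..x₁, P ((x - x₀) / (x₁ - x₀)) = (x₁ - x₀) * ∫ t in (0 : ℝ)..1, P t := by
  have hh : x₁ - x₀ ≠ 0 := sub_ne_zero.2 h.symm
  simp_rw [sub_div]
  rw [integral_comp_div_sub P hh, smul_eq_mul, sub_self, ← sub_div, div_self hh]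

theorem mem_Ioo_normalize {x : ℝ} (hx : x ∈ Ioo x₀ x₁) : (x - x₀) / (x₁ - x₀) ∈ Ioo 0 1 :=
  ⟨div_pos (sub_pos.2 hx.1) (sub_pos.2 (hx.1.trans hx.2)),
    (div_lt_one (sub_pos.2 (hx.1.trans hx.2))).2 (sub_lt_sub_right hx.2 x₀)⟩

@[simp]
theorem affineInterp_left (y₀ y₁ : ℝ) : affineInterp x₀ x₁ y₀ y₁ x₀ = y₀ := by
  simp [affineInterp]

@[simp]
theorem affineInterp_right (h : x₀ ≠ x₁) (y₀ y₁ : ℝ) : affineInterp x₀ x₁ y₀ y₁ x₁ = y₁ := by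
  simp [affineInterp, sub_ne_zero.2 h.symm]

theorem affineInterp_eq_add_mul (y₀ y₁ x : ℝ) :
    affineInterp x₀ x₁ y₀ y₁ x =
      y₀ * affineInterp x₀ x₁ 1 0 x + y₁ * affineInterp x₀ x₁ 0 1 x := by
  simp only [affineInterp]; ring

@[fun_prop]
theorem continuous_affineInterp (y₀ y₁ : ℝ) : Continuous (affineInterp x₀ x₁ y₀ y₁) := by
  unfold affineInterp; fun_prop

theorem hasDerivAt_affineInterp (y₀ y₁ x : ℝ) :
    HasDerivAt (affineInterp x₀ x₁ y₀ y₁) ((y₁ - y₀) / (x₁ - x₀)) x := by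
  have ht : HasDerivAt (fun x => (x - x₀) / (x₁ - x₀)) (1 / (x₁ - x₀)) x :=
    ((hasDerivAt_id x).sub_const x₀).div_const _
  exact (((ht.const_sub 1).const_mul y₀).add (ht.const_mul y₁)).congr_deriv (by ring)

theorem affineInterp_pos {y₀ y₁ x : ℝ} (hy₀ : 0 ≤ y₀) (hy₁ : 0 ≤ y₁) (hy : 0 < y₀ + y₁)
    (hx : x ∈ Ioo x₀ x₁) : 0 < affineInterp x₀ x₁ y₀ y₁ x := by
  obtain ⟨ht₀, ht₁⟩ := mem_Ioo_normalize hx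
  have ht₁' := sub_pos.2 ht₁
  unfold affineInterp
  nlinarith [mul_nonneg (mul_nonneg hy₀ ht₁'.le) ht₁'.le, mul_nonneg (mul_nonneg hy₁ ht₀.le) ht₀.le,
    mul_pos (mul_pos hy ht₀) ht₁']

theorem integral_affineInterp_sq (h : x₀ ≠ x₁) (y₀ y₁ : ℝ) :
    ∫ x in x₀..x₁, affineInterp x₀ x₁ y₀ y₁ x ^ 2 =
      (x₁ - x₀) / 3 * (y₀ ^ 2 + y₀ * y₁ + y₁ ^ 2) := by
  unfold affineInterp
  rw [integral_comp_normalize h fun t => (y₀ * (1 - t) + y₁ * t) ^ 2]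
  calc (x₁ - x₀) * ∫ t in (0 : ℝ)..1, (y₀ * (1 - t) + y₁ * t) ^ 2
      = (x₁ - x₀) * ∫ t in (0 : ℝ)..1,
          (y₀ ^ 2 + 2 * y₀ * (y₁ - y₀) * t + (y₁ - y₀) ^ 2 * t ^ 2 + 0 * t ^ 3 + 0 * t ^ 4) := by
        congr 2; ext t; ring
    _ = _ := by rw [integral_zero_one_quartic]; ring

end AffineInterp

section Interpolation

variable {f f' f'' : ℝ → ℝ} {x₀ x₁ : ℝ}

theorem exists_sub_affineInterp_eq (hf : ContinuousOn f (Icc x₀ x₁))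
    (hf' : ∀ x ∈ Ioo x₀ x₁, HasDerivAt f (f' x) x)
    (hf'' : ∀ x ∈ Ioo x₀ x₁, HasDerivAt f' (f'' x) x) {x : ℝ} (hx : x ∈ Ioo x₀ x₁) :
    ∃ ξ ∈ Ioo x₀ x₁, f x - affineInterp x₀ x₁ (f x₀) (f x₁) x =
      -((x₁ - x₀) ^ 2 / 2) * f'' ξ * ((x - x₀) / (x₁ - x₀) * (1 - (x - x₀) / (x₁ - x₀))) := by
  have hne : x₁ - x₀ ≠ 0 := sub_ne_zero.2 (hx.1.trans hx.2).ne'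
  have hx₀ : x - x₀ ≠ 0 := (sub_pos.2 hx.1).ne'
  have hx₁ : x - x₁ ≠ 0 := (sub_neg.2 hx.2).ne
  have hw : (x - x₀) * (x - x₁) ≠ 0 := mul_ne_zero hx₀ hx₁
  set k := (f x - affineInterp x₀ x₁ (f x₀) (f x₁) x) / ((x - x₀) * (x - x₁)) with hk
  set g := fun y => f y - affineInterp x₀ x₁ (f x₀) (f x₁) y - k * ((y - x₀) * (y - x₁))
  have hq (y : ℝ) : HasDerivAt (fun y => (y - x₀) * (y - x₁)) (2 * y - x₀ - x₁) y :=
    (((hasDerivAt_id y).sub_const x₀).mul ((hasDerivAt_id y).sub_const x₁)).congr_deriv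
      (by simp only [id]; ring)
  -- `k` is chosen so that `g` vanishes at `x` as well as at both endpoints.
  obtain ⟨ξ, hξ, hξ0⟩ := exists_hasDerivAt_eq_zero_of_three_eq (g := g)
    (g' := fun y => f' y - (f x₁ - f x₀) / (x₁ - x₀) - k * (2 * y - x₀ - x₁))
    (g'' := fun y => f'' y - k * 2) hx.1 hx.2
    (hf.sub (continuous_affineInterp _ _).continuousOn |>.sub (by fun_prop))
    (fun y hy => ((hf' y hy).sub (hasDerivAt_affineInterp _ _ y)).sub ((hq y).const_mul k))
    (fun y hy => ((hf'' y hy).sub_const _).sub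
      ((((hasDerivAt_id y).const_mul 2).sub_const x₀ |>.sub_const x₁).const_mul k |>.congr_deriv
        (by ring)))
    (by simp [g, hk, div_mul_cancel₀ _ hw])
    (by simp [g, hk, div_mul_cancel₀ _ hw, (hx.1.trans hx.2).ne])
  refine ⟨ξ, hξ, ?_⟩
  rw [show f'' ξ = 2 * k by linarith, hk]
  field_simp
  ring

theorem exists_integral_sq_sub_affineInterp_eq (hx : x₀ < x₁) (hf : ContinuousOn f (Icc x₀ x₁))
    (hf' : ∀ x ∈ Ioo x₀ x₁, HasDerivAt f (f' x) x)
    (hf'' : ∀ x ∈ Ioo x₀ x₁, HasDerivAt f' (f'' x) x) (hf''c : ContinuousOn f'' (Ioo x₀ x₁)) :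
    ∃ η ∈ Ioo x₀ x₁, ∫ x in x₀..x₁, (f x - affineInterp x₀ x₁ (f x₀) (f x₁) x) ^ 2 =
      (x₁ - x₀) ^ 5 / 120 * f'' η ^ 2 := by
  have hr : ContinuousOn (fun x => f x - affineInterp x₀ x₁ (f x₀) (f x₁) x) (Icc x₀ x₁) :=
    hf.sub (continuous_affineInterp _ _).continuousOn
  obtain ⟨η, hη, h⟩ := exists_mem_Ioo_integral_eq_mul_integral hx (g := fun ξ => f'' ξ ^ 2)
    (F := fun x => (f x - affineInterp x₀ x₁ (f x₀) (f x₁) x) ^ 2)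
    (w := fun x => ((x₁ - x₀) ^ 2 / 2 * ((x - x₀) / (x₁ - x₀) * (1 - (x - x₀) / (x₁ - x₀)))) ^ 2)
    (hf''c.pow 2) ((hr.pow 2).intervalIntegrable_of_Icc hx.le)
    (by apply Continuous.intervalIntegrable; fun_prop)
    (fun x hx' => by
      obtain ⟨ht₀, ht₁⟩ := mem_Ioo_normalize hx'
      have := sub_pos.2 hx
      exact pow_pos (mul_pos (by positivity) (mul_pos ht₀ (sub_pos.2 ht₁))) 2)
    (fun x hx' => by
      obtain ⟨ξ, hξ, hξx⟩ := exists_sub_affineInterp_eq hf hf' hf'' hx'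
      exact ⟨ξ, hξ, by rw [hξx]; ring⟩)
  refine ⟨η, hη, ?_⟩
  rw [h, integral_comp_normalize hx.ne fun t => ((x₁ - x₀) ^ 2 / 2 * (t * (1 - t))) ^ 2]
  calc f'' η ^ 2 * ((x₁ - x₀) * ∫ t in (0 : ℝ)..1, ((x₁ - x₀) ^ 2 / 2 * (t * (1 - t))) ^ 2)
      = f'' η ^ 2 * ((x₁ - x₀) * ∫ t in (0 : ℝ)..1, (0 + 0 * t + (x₁ - x₀) ^ 4 / 4 * t ^ 2
          + -((x₁ - x₀) ^ 4 / 2) * t ^ 3 + (x₁ - x₀) ^ 4 / 4 * t ^ 4)) := by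
        congr 3; ext t; ring
    _ = _ := by rw [integral_zero_one_quartic]; ring

theorem exists_integral_sub_affineInterp_mul_eq (hx : x₀ < x₁) (hf : ContinuousOn f (Icc x₀ x₁))
    (hf' : ∀ x ∈ Ioo x₀ x₁, HasDerivAt f (f' x) x)
    (hf'' : ∀ x ∈ Ioo x₀ x₁, HasDerivAt f' (f'' x) x) (hf''c : ContinuousOn f'' (Ioo x₀ x₁))
    {y₀ y₁ : ℝ} (hy₀ : 0 ≤ y₀) (hy₁ : 0 ≤ y₁) (hy : 0 < y₀ + y₁) :
    ∃ η ∈ Ioo x₀ x₁,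
      ∫ x in x₀..x₁, (f x - affineInterp x₀ x₁ (f x₀) (f x₁) x) * affineInterp x₀ x₁ y₀ y₁ x =
        -((x₁ - x₀) ^ 3 / 24 * (y₀ + y₁) * f'' η) := by
  have hr : ContinuousOn (fun x => f x - affineInterp x₀ x₁ (f x₀) (f x₁) x) (Icc x₀ x₁) :=
    hf.sub (continuous_affineInterp _ _).continuousOn
  obtain ⟨η, hη, h⟩ := exists_mem_Ioo_integral_eq_mul_integral hx (g := fun ξ => -f'' ξ)
    (F := fun x => (f x - affineInterp x₀ x₁ (f x₀) (f x₁) x) * affineInterp x₀ x₁ y₀ y₁ x)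
    (w := fun x => (x₁ - x₀) ^ 2 / 2 * ((x - x₀) / (x₁ - x₀) * (1 - (x - x₀) / (x₁ - x₀))) *
      affineInterp x₀ x₁ y₀ y₁ x)
    hf''c.neg ((hr.mul (continuous_affineInterp _ _).continuousOn).intervalIntegrable_of_Icc hx.le)
    (by apply Continuous.intervalIntegrable; fun_prop)
    (fun x hx' => by
      obtain ⟨ht₀, ht₁⟩ := mem_Ioo_normalize hx'
      have := sub_pos.2 hx
      exact mul_pos (mul_pos (by positivity) (mul_pos ht₀ (sub_pos.2 ht₁)))
        (affineInterp_pos hy₀ hy₁ hy hx'))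
    (fun x hx' => by
      obtain ⟨ξ, hξ, hξx⟩ := exists_sub_affineInterp_eq hf hf' hf'' hx'
      exact ⟨ξ, hξ, by rw [hξx]; ring⟩)
  refine ⟨η, hη, ?_⟩
  rw [h]
  unfold affineInterp
  rw [integral_comp_normalize hx.ne
    fun t => (x₁ - x₀) ^ 2 / 2 * (t * (1 - t)) * (y₀ * (1 - t) + y₁ * t)]
  calc -f'' η * ((x₁ - x₀) * ∫ t in (0 : ℝ)..1,
        (x₁ - x₀) ^ 2 / 2 * (t * (1 - t)) * (y₀ * (1 - t) + y₁ * t))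
      = -f'' η * ((x₁ - x₀) * ∫ t in (0 : ℝ)..1, (0 + (x₁ - x₀) ^ 2 / 2 * y₀ * t
          + (x₁ - x₀) ^ 2 / 2 * (y₁ - 2 * y₀) * t ^ 2 + (x₁ - x₀) ^ 2 / 2 * (y₀ - y₁) * t ^ 3
          + 0 * t ^ 4)) := by
        congr 3; ext t; ring
    _ = _ := by rw [integral_zero_one_quartic]; ring

end Interpolation

theorem isLeast_integral_sq_sub_affineInterp {r : ℝ → ℝ} {x₀ x₁ a b : ℝ} (hx : x₀ < x₁)
    (hr : ContinuousOn r (Icc x₀ x₁))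
    (ha : ∫ x in x₀..x₁, r x * affineInterp x₀ x₁ 1 0 x = a)
    (hb : ∫ x in x₀..x₁, r x * affineInterp x₀ x₁ 0 1 x = b) :
    IsLeast {e | ∃ d₀ d₁ : ℝ, e = ∫ x in x₀..x₁, (r x - affineInterp x₀ x₁ d₀ d₁ x) ^ 2}
      ((∫ x in x₀..x₁, r x ^ 2) - 4 / (x₁ - x₀) * (a ^ 2 - a * b + b ^ 2)) := by
  have hint {φ : ℝ → ℝ} (hφ : Continuous φ) :
      IntervalIntegrable (fun x => r x * φ x) volume x₀ x₁ :=
    (hr.mul hφ.continuousOn).intervalIntegrable_of_Icc hx.le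
  have hexpand (d₀ d₁ : ℝ) : ∫ x in x₀..x₁, (r x - affineInterp x₀ x₁ d₀ d₁ x) ^ 2 =
      (∫ x in x₀..x₁, r x ^ 2) - 2 * (d₀ * a + d₁ * b) +
        (x₁ - x₀) / 3 * (d₀ ^ 2 + d₀ * d₁ + d₁ ^ 2) := by
    have hsq : IntervalIntegrable (fun x => r x ^ 2) volume x₀ x₁ :=
      (hr.pow 2).intervalIntegrable_of_Icc hx.le
    have h₀ := (hint (continuous_affineInterp (x₀ := x₀) (x₁ := x₁) 1 0)).const_mul d₀
    have h₁ := (hint (continuous_affineInterp (x₀ := x₀) (x₁ := x₁) 0 1)).const_mul d₁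
    have hφ : IntervalIntegrable (fun x => affineInterp x₀ x₁ d₀ d₁ x ^ 2) volume x₀ x₁ := by
      apply Continuous.intervalIntegrable; fun_prop
    rw [← ha, ← hb, ← integral_affineInterp_sq hx.ne, ← intervalIntegral.integral_const_mul,
      ← intervalIntegral.integral_const_mul, ← intervalIntegral.integral_add h₀ h₁,
      ← intervalIntegral.integral_const_mul,
      ← intervalIntegral.integral_sub hsq ((h₀.add h₁).const_mul 2),
      ← intervalIntegral.integral_add (hsq.sub ((h₀.add h₁).const_mul 2)) hφ]
    refine intervalIntegral.integral_congr fun x _ => ?_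
    rw [affineInterp_eq_add_mul d₀ d₁ x]
    ring
  simp only [hexpand]
  exact isLeast_quadratic (sub_pos.2 hx) _ a b

/-- minimum squared L² error of a free line segment over an interval. -/
theorem best_line_segment_sq_error
    (f f' f'' : ℝ → ℝ) (x₀ x₁ : ℝ) (hx : x₀ < x₁)
    (hf' : ∀ x ∈ Set.Icc x₀ x₁, HasDerivWithinAt f (f' x) (Set.Icc x₀ x₁) x)
    (hf'' : ∀ x ∈ Set.Icc x₀ x₁, HasDerivWithinAt f' (f'' x) (Set.Icc x₀ x₁) x)
    (hf''c : ContinuousOn f'' (Set.Icc x₀ x₁)) :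
    ∃ η ∈ Set.Ioo x₀ x₁, ∃ η₀ ∈ Set.Ioo x₀ x₁, ∃ η₁ ∈ Set.Ioo x₀ x₁,
      IsLeast
        {e : ℝ | ∃ d₀ d₁ : ℝ, e = ∫ x in x₀..x₁,
          (f x - ((f x₀ + d₀) * (1 - (x - x₀) / (x₁ - x₀))
                   + (f x₁ + d₁) * ((x - x₀) / (x₁ - x₀))))^2}
        ((x₁ - x₀)^5 / 120 * (f'' η)^2
          - (x₁ - x₀)^5 / 144 * ((f'' η₀)^2 + (f'' η₁)^2 - f'' η₀ * f'' η₁)) := by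
  have hf : ContinuousOn f (Icc x₀ x₁) := fun x hx => (hf' x hx).continuousWithinAt
  have hf'o : ∀ x ∈ Ioo x₀ x₁, HasDerivAt f (f' x) x := fun x hx =>
    (hf' x (Ioo_subset_Icc_self hx)).hasDerivAt (Icc_mem_nhds hx.1 hx.2)
  have hf''o : ∀ x ∈ Ioo x₀ x₁, HasDerivAt f' (f'' x) x := fun x hx =>
    (hf'' x (Ioo_subset_Icc_self hx)).hasDerivAt (Icc_mem_nhds hx.1 hx.2)
  have hf''co := hf''c.mono Ioo_subset_Icc_self
  obtain ⟨η, hη, hsq⟩ := exists_integral_sq_sub_affineInterp_eq hx hf hf'o hf''o hf''co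
  obtain ⟨η₀, hη₀, h₀⟩ := exists_integral_sub_affineInterp_mul_eq hx hf hf'o hf''o hf''co
    (y₀ := 1) (y₁ := 0) zero_le_one le_rfl (by norm_num)
  obtain ⟨η₁, hη₁, h₁⟩ := exists_integral_sub_affineInterp_mul_eq hx hf hf'o hf''o hf''co
    (y₀ := 0) (y₁ := 1) le_rfl zero_le_one (by norm_num)
  refine ⟨η, hη, η₀, hη₀, η₁, hη₁, ?_⟩
  have hsplit (d₀ d₁ x : ℝ) : f x - ((f x₀ + d₀) * (1 - (x - x₀) / (x₁ - x₀))
      + (f x₁ + d₁) * ((x - x₀) / (x₁ - x₀))) =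
      f x - affineInterp x₀ x₁ (f x₀) (f x₁) x - affineInterp x₀ x₁ d₀ d₁ x := by
    unfold affineInterp; ring
  simp only [hsplit]
  convert isLeast_integral_sq_sub_affineInterp hx
    (r := fun x => f x - affineInterp x₀ x₁ (f x₀) (f x₁) x)
    (hf.sub (continuous_affineInterp _ _).continuousOn) h₀ h₁ using 1
  rw [hsq]
  field_simp
  ring
end

section
/- Let f be C² on [a,b] and a = x₀ < x₁ < ... < x_N = b a partition with hᵢ = xᵢ − x_{i−1} and Mᵢ = max_{x∈[x_{i−1},xᵢ]} |f''(x)|. If Mᵢ · hᵢ^{5/2} ≤ C for all i, then the piecewise linear interpolant π f satisfies ‖f − π f‖²_{L²([a,b])} ≤ C²·N/120. -/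
/-!
On a cell `[α, β]` the interpolation error `e = f - p` vanishes at both ends, and Rolle's theorem
applied twice to `e - K (s - α) (β - s)` gives the classical bound
`|e t| ≤ max |f''| / 2 · (t - α) (β - t)`. Integrating its square, `∫ ((t - α) (β - t))² = h⁵ / 30`,
bounds the cell error by `M² h⁵ / 120 = (M h^{5/2})² / 120 ≤ C² / 120`; summing over the `N` cells
gives `C² N / 120`.
-/

open MeasureTheory Set intervalIntegral

theorem exists_hasDerivAt_hasDerivAt_eq_zero_s12 {φ φ' φ'' : ℝ → ℝ} {α t β : ℝ}
    (hαt : α < t) (htβ : t < β) (hc : ContinuousOn φ (Icc α β))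
    (hφαt : φ α = φ t) (hφtβ : φ t = φ β)
    (hφ' : ∀ s ∈ Ioo α β, HasDerivAt φ (φ' s) s)
    (hφ'' : ∀ s ∈ Ioo α β, HasDerivAt φ' (φ'' s) s) :
    ∃ ξ ∈ Ioo α β, φ'' ξ = 0 := by
  obtain ⟨ξ₁, hξ₁, hφ'ξ₁⟩ := exists_hasDerivAt_eq_zero hαt
    (hc.mono (Icc_subset_Icc_right htβ.le)) hφαt
    fun s hs => hφ' s (Ioo_subset_Ioo_right htβ.le hs)
  obtain ⟨ξ₂, hξ₂, hφ'ξ₂⟩ := exists_hasDerivAt_eq_zero htβ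
    (hc.mono (Icc_subset_Icc_left hαt.le)) hφtβ
    fun s hs => hφ' s (Ioo_subset_Ioo_left hαt.le hs)
  have hsub : Icc ξ₁ ξ₂ ⊆ Ioo α β := Icc_subset_Ioo hξ₁.1 hξ₂.2
  obtain ⟨ξ, hξ, hφ''ξ⟩ := exists_hasDerivAt_eq_zero (hξ₁.2.trans hξ₂.1)
    (fun s hs => (hφ'' s (hsub hs)).continuousAt.continuousWithinAt)
    (hφ'ξ₁.trans hφ'ξ₂.symm) fun s hs => hφ'' s (hsub (Ioo_subset_Icc_self hs))
  exact ⟨ξ, hsub (Ioo_subset_Icc_self hξ), hφ''ξ⟩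

theorem abs_le_of_eq_zero_of_abs_deriv2_le {e e' e'' : ℝ → ℝ} {α β M t : ℝ}
    (hc : ContinuousOn e (Icc α β)) (heα : e α = 0) (heβ : e β = 0)
    (he' : ∀ s ∈ Ioo α β, HasDerivAt e (e' s) s)
    (he'' : ∀ s ∈ Ioo α β, HasDerivAt e' (e'' s) s)
    (hM : ∀ s ∈ Ioo α β, |e'' s| ≤ M) (ht : t ∈ Icc α β) :
    |e t| ≤ M / 2 * ((t - α) * (β - t)) := by
  rcases ht.1.eq_or_lt with rfl | hαt
  · simp [heα]
  rcases ht.2.eq_or_lt with rfl | htβ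
  · simp [heβ]
  have hw : 0 < (t - α) * (β - t) := mul_pos (sub_pos.2 hαt) (sub_pos.2 htβ)
  -- `φ = e - K (s - α) (β - s)` vanishes at `α`, `t` and `β`, so `φ'' = e'' + 2 K` has a zero
  set K := e t / ((t - α) * (β - t)) with hK
  obtain ⟨ξ, hξ, hφ''ξ⟩ := exists_hasDerivAt_hasDerivAt_eq_zero_s12 (φ'' := fun s => e'' s + 2 * K)
    (φ := fun s => e s - K * ((s - α) * (β - s))) (φ' := fun s => e' s - K * (α + β - 2 * s))
    hαt htβ (hc.sub (by fun_prop))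
    (by simp [heα, hK, hw.ne']) (by simp [heβ, hK, hw.ne'])
    (fun s hs => (he' s hs).sub
      ((((hasDerivAt_id' s).sub_const α).mul ((hasDerivAt_id' s).const_sub β)).const_mul K
        |>.congr_deriv (by ring)))
    (fun s hs => (he'' s hs).sub
      ((((hasDerivAt_id' s).const_mul 2).const_sub (α + β)).const_mul K) |>.congr_deriv (by ring))
  have hKξ : |K| ≤ M / 2 := by
    rw [show K = -e'' ξ / 2 by linarith, abs_div, abs_neg, abs_two]
    linarith [hM ξ hξ]
  calc |e t| = |K| * ((t - α) * (β - t)) := by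
        rw [hK, abs_div, abs_of_pos hw, div_mul_cancel₀ _ hw.ne']
    _ ≤ M / 2 * ((t - α) * (β - t)) := mul_le_mul_of_nonneg_right hKξ hw.le

theorem integral_mul_sub_sq (α β : ℝ) :
    ∫ t in α..β, ((t - α) * (β - t)) ^ 2 = (β - α) ^ 5 / 30 := by
  have hderiv : ∀ t ∈ uIcc α β, HasDerivAt
      (fun t => (β - α) ^ 2 * (t - α) ^ 3 / 3 - (β - α) * (t - α) ^ 4 / 2 + (t - α) ^ 5 / 5)
      (((t - α) * (β - t)) ^ 2) t := by
    intro t _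
    have hid := (hasDerivAt_id' t).sub_const α
    exact ((((hid.pow 3).const_mul ((β - α) ^ 2)).div_const 3).sub
      (((hid.pow 4).const_mul (β - α)).div_const 2)).add ((hid.pow 5).div_const 5)
      |>.congr_deriv (by push_cast; ring)
  rw [integral_eq_sub_of_hasDerivAt hderiv (by apply Continuous.intervalIntegrable; fun_prop)]
  ring

theorem integral_sq_le_of_eq_zero_of_abs_deriv2_le {e e' e'' : ℝ → ℝ} {α β M : ℝ} (hαβ : α ≤ β)
    (hc : ContinuousOn e (Icc α β)) (heα : e α = 0) (heβ : e β = 0)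
    (he' : ∀ s ∈ Ioo α β, HasDerivAt e (e' s) s)
    (he'' : ∀ s ∈ Ioo α β, HasDerivAt e' (e'' s) s)
    (hM : ∀ s ∈ Ioo α β, |e'' s| ≤ M) :
    ∫ t in α..β, e t ^ 2 ≤ M ^ 2 * (β - α) ^ 5 / 120 := by
  have hpointwise : ∀ t ∈ Icc α β, e t ^ 2 ≤ M ^ 2 / 4 * ((t - α) * (β - t)) ^ 2 := fun t ht =>
    calc e t ^ 2 = |e t| ^ 2 := (sq_abs _).symm
      _ ≤ (M / 2 * ((t - α) * (β - t))) ^ 2 := pow_le_pow_left₀ (abs_nonneg _)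
          (abs_le_of_eq_zero_of_abs_deriv2_le hc heα heβ he' he'' hM ht) 2
      _ = M ^ 2 / 4 * ((t - α) * (β - t)) ^ 2 := by ring
  calc ∫ t in α..β, e t ^ 2 ≤ ∫ t in α..β, M ^ 2 / 4 * ((t - α) * (β - t)) ^ 2 :=
        integral_mono_on hαβ ((hc.pow 2).intervalIntegrable_of_Icc hαβ)
          (by apply Continuous.intervalIntegrable; fun_prop) hpointwise
    _ = M ^ 2 * (β - α) ^ 5 / 120 := by
        rw [intervalIntegral.integral_const_mul, integral_mul_sub_sq]
        ring

theorem integral_sq_sub_le_of_eqOn_affine {f f' f'' p : ℝ → ℝ} {α β c d M : ℝ} (hαβ : α ≤ β)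
    (hf : ContinuousOn f (Icc α β))
    (hf' : ∀ s ∈ Ioo α β, HasDerivAt f (f' s) s)
    (hf'' : ∀ s ∈ Ioo α β, HasDerivAt f' (f'' s) s)
    (hM : ∀ s ∈ Ioo α β, |f'' s| ≤ M)
    (hp : EqOn p (fun t => c * t + d) (Icc α β)) (hpα : p α = f α) (hpβ : p β = f β) :
    ∫ t in α..β, (f t - p t) ^ 2 ≤ M ^ 2 * (β - α) ^ 5 / 120 := by
  rw [integral_congr (g := fun t => (f t - (c * t + d)) ^ 2) fun t ht => by
    rw [uIcc_of_le hαβ] at ht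
    simp only [hp ht]]
  exact integral_sq_le_of_eq_zero_of_abs_deriv2_le (e' := fun s => f' s - c) hαβ
    (hf.sub (by fun_prop)) (by rw [← hpα, hp ⟨le_rfl, hαβ⟩]; exact sub_self _)
    (by rw [← hpβ, hp ⟨hαβ, le_rfl⟩]; exact sub_self _)
    (fun s hs => (hf' s hs).sub (((hasDerivAt_id' s).const_mul c).add_const d
      |>.congr_deriv (mul_one c)))
    (fun s hs => (hf'' s hs).sub_const c) hM

theorem sq_mul_pow_five_le_sq_of_mul_rpow_le {M h C : ℝ} (hM : 0 ≤ M) (hh : 0 ≤ h)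
    (hC : M * h ^ ((5 : ℝ) / 2) ≤ C) : M ^ 2 * h ^ 5 ≤ C ^ 2 := by
  have hsq : (M * h ^ ((5 : ℝ) / 2)) ^ 2 = M ^ 2 * h ^ 5 := by
    rw [mul_pow, ← Real.rpow_natCast (h ^ _), ← Real.rpow_mul hh]
    norm_num
  exact hsq ▸ pow_le_pow_left₀ (mul_nonneg hM (Real.rpow_nonneg hh _)) hC 2

theorem sum_integral_adjacent_intervals_fin {E : Type*} [NormedAddCommGroup E] [NormedSpace ℝ E]
    {g : ℝ → E} {μ : Measure ℝ} [IsLocallyFiniteMeasure μ] {N : ℕ} (x : Fin (N + 1) → ℝ)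
    (hg : ∀ k : Fin N, IntervalIntegrable g μ (x k.castSucc) (x k.succ)) :
    ∑ k : Fin N, ∫ t in x k.castSucc..x k.succ, g t ∂μ = ∫ t in x 0..x (Fin.last N), g t ∂μ := by
  set y : ℕ → ℝ := fun i => x (Fin.clamp i N)
  have hy : ∀ k : Fin N, y k = x k.castSucc ∧ y (k + 1) = x k.succ := fun k =>
    ⟨congrArg x (Fin.ext (min_eq_left k.isLt.le)), congrArg x (Fin.ext (min_eq_left k.isLt))⟩
  have h0 : y 0 = x 0 := rfl
  have hN : y N = x (Fin.last N) := congrArg x (Fin.ext (min_self N))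
  calc ∑ k : Fin N, ∫ t in x k.castSucc..x k.succ, g t ∂μ
      = ∑ k ∈ Finset.range N, ∫ t in y k..y (k + 1), g t ∂μ := by
        rw [← Fin.sum_univ_eq_sum_range (fun k => ∫ t in y k..y (k + 1), g t ∂μ)]
        exact Finset.sum_congr rfl fun k _ => by rw [(hy k).1, (hy k).2]
    _ = ∫ t in x 0..x (Fin.last N), g t ∂μ := by
        rw [sum_integral_adjacent_intervals fun k hk => ?_, h0, hN]
        rw [(hy ⟨k, hk⟩).1, (hy ⟨k, hk⟩).2]
        exact hg ⟨k, hk⟩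

theorem pwl_interpolant_equalized_error_bound_general
    (f f' f'' : ℝ → ℝ) (a b : ℝ) (N : ℕ)
    (hf' : ∀ x ∈ Set.Icc a b, HasDerivWithinAt f (f' x) (Set.Icc a b) x)
    (hf'' : ∀ x ∈ Set.Icc a b, HasDerivWithinAt f' (f'' x) (Set.Icc a b) x)
    (x : Fin (N + 1) → ℝ) (hmono : StrictMono x)
    (hx0 : x 0 = a) (hxN : x (Fin.last N) = b)
    (p : ℝ → ℝ)
    (hinterp : ∀ i, p (x i) = f (x i))
    (haff : ∀ k : Fin N, ∃ c d : ℝ,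
      ∀ t ∈ Set.Icc (x k.castSucc) (x k.succ), p t = c * t + d)
    (M : Fin N → ℝ)
    (hMk : ∀ k : Fin N,
      IsGreatest ((fun t => |f'' t|) '' Set.Icc (x k.castSucc) (x k.succ)) (M k))
    (C : ℝ)
    (hC : ∀ k : Fin N, M k * (x k.succ - x k.castSucc) ^ ((5 : ℝ) / 2) ≤ C) :
    (∫ t in a..b, (f t - p t)^2) ≤ C^2 * N / 120 := by
  have hf : ContinuousOn f (Icc a b) := fun s hs => (hf' s hs).continuousWithinAt
  have hf'o : ∀ s ∈ Ioo a b, HasDerivAt f (f' s) s := fun s hs =>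
    (hf' s (Ioo_subset_Icc_self hs)).hasDerivAt (Icc_mem_nhds hs.1 hs.2)
  have hf''o : ∀ s ∈ Ioo a b, HasDerivAt f' (f'' s) s := fun s hs =>
    (hf'' s (Ioo_subset_Icc_self hs)).hasDerivAt (Icc_mem_nhds hs.1 hs.2)
  have ha : ∀ k : Fin N, a ≤ x k.castSucc := fun k => hx0 ▸ hmono.monotone (Fin.zero_le _)
  have hb : ∀ k : Fin N, x k.succ ≤ b := fun k => hxN ▸ hmono.monotone (Fin.le_last _)
  have hle : ∀ k : Fin N, x k.castSucc ≤ x k.succ := fun k => hmono.monotone k.castSucc_le_succ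
  have hint : ∀ k : Fin N,
      IntervalIntegrable (fun t => (f t - p t) ^ 2) volume (x k.castSucc) (x k.succ) := by
    intro k
    obtain ⟨c, d, hp⟩ := haff k
    exact ((hf.mono (Icc_subset_Icc (ha k) (hb k))).sub
      ((by fun_prop : Continuous fun t => c * t + d).continuousOn.congr hp)).pow 2
      |>.intervalIntegrable_of_Icc (hle k)
  have hcell : ∀ k : Fin N, ∫ t in x k.castSucc..x k.succ, (f t - p t) ^ 2 ≤ C ^ 2 / 120 := by
    intro k
    obtain ⟨c, d, hp⟩ := haff k
    have hM0 : 0 ≤ M k := by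
      obtain ⟨_, _, h⟩ := (hMk k).1
      exact h ▸ abs_nonneg _
    calc _ ≤ M k ^ 2 * (x k.succ - x k.castSucc) ^ 5 / 120 :=
          integral_sq_sub_le_of_eqOn_affine (hle k) (hf.mono (Icc_subset_Icc (ha k) (hb k)))
            (fun s hs => hf'o s (Ioo_subset_Ioo (ha k) (hb k) hs))
            (fun s hs => hf''o s (Ioo_subset_Ioo (ha k) (hb k) hs))
            (fun s hs => (hMk k).2 ⟨s, Ioo_subset_Icc_self hs, rfl⟩) hp (hinterp _) (hinterp _)
      _ ≤ C ^ 2 / 120 := by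
          gcongr
          exact sq_mul_pow_five_le_sq_of_mul_rpow_le hM0 (sub_nonneg.2 (hle k)) (hC k)
  rw [← hx0, ← hxN, ← sum_integral_adjacent_intervals_fin x hint]
  calc _ ≤ ∑ _k : Fin N, C ^ 2 / 120 := Finset.sum_le_sum fun k _ => hcell k
    _ = C ^ 2 * N / 120 := by
        rw [Finset.sum_const, Finset.card_univ, Fintype.card_fin, nsmul_eq_mul]
        ring

/-- if Mᵢ·hᵢ^{5/2} ≤ C on every subinterval then the total squared L²
interpolation error is at most C²·N/120. -/
theorem pwl_interpolant_equalized_error_bound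
    (f f' f'' : ℝ → ℝ) (a b : ℝ) (hab : a < b) (N : ℕ) (hN : 1 ≤ N)
    (hf' : ∀ x ∈ Set.Icc a b, HasDerivWithinAt f (f' x) (Set.Icc a b) x)
    (hf'' : ∀ x ∈ Set.Icc a b, HasDerivWithinAt f' (f'' x) (Set.Icc a b) x)
    (hf''c : ContinuousOn f'' (Set.Icc a b))
    (x : Fin (N + 1) → ℝ) (hmono : StrictMono x)
    (hx0 : x 0 = a) (hxN : x (Fin.last N) = b)
    (p : ℝ → ℝ)
    (hinterp : ∀ i, p (x i) = f (x i))
    (haff : ∀ k : Fin N, ∃ c d : ℝ,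
      ∀ t ∈ Set.Icc (x k.castSucc) (x k.succ), p t = c * t + d)
    (M : Fin N → ℝ)
    (hMk : ∀ k : Fin N,
      IsGreatest ((fun t => |f'' t|) '' Set.Icc (x k.castSucc) (x k.succ)) (M k))
    (C : ℝ)
    (hC : ∀ k : Fin N, M k * (x k.succ - x k.castSucc) ^ ((5 : ℝ) / 2) ≤ C) :
    (∫ t in a..b, (f t - p t)^2) ≤ C^2 * N / 120 :=
  pwl_interpolant_equalized_error_bound_general f f' f'' a b N hf' hf'' x hmono hx0 hxN p hinterp
    haff M hMk C hC
end

section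
/- Let f be C² on [x₀−h, x₀+h] with |f''| ≤ K. Consider on each of I⁻ = [x₀−h, x₀] and I⁺ = [x₀, x₀+h] the independently L²-optimal affine approximations ℓ⁻ and ℓ⁺ of f. Then the jump at the common knot satisfies |ℓ⁻(x₀) − ℓ⁺(x₀)| ≤ K·h²/2. In particular the discontinuity vanishes as h → 0. -/
/-!
After an affine change of variables each half-interval becomes `[0, 1]` with the knot at `0`, and
the bound on the second derivative becomes `M = K h²`. The residual of the best affine
approximation `ℓ` of `φ` is orthogonal to all affine functions, and `4 - 6 s` represents evaluation
at `0` on affine functions, so `ℓ 0 - φ 0 = ∫ (φ - p) (4 - 6 s)` for the tangent line `p` of `φ`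
at `0`. Taylor's bound `|φ - p| ≤ M s² / 2` and `|4 - 6 s| ≤ ((4 - 6 s)² + 1) / 2` bound this by
`13 M / 60`; the two sides together give `13 K h² / 30 ≤ K h² / 2`.
-/

open Set intervalIntegral

def IsBestAffineL2Approx (f ℓ : ℝ → ℝ) (a b : ℝ) : Prop :=
  ∀ c d : ℝ, ∫ t in a..b, (f t - ℓ t) ^ 2 ≤ ∫ t in a..b, (f t - (c * t + d)) ^ 2

theorem abs_sub_tangent_le_of_abs_deriv2_le {f f' f'' : ℝ → ℝ} {a b M : ℝ}
    (hf : ∀ x ∈ Icc a b, HasDerivWithinAt f (f' x) (Icc a b) x)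
    (hf' : ∀ x ∈ Icc a b, HasDerivWithinAt f' (f'' x) (Icc a b) x)
    (hM : ∀ x ∈ Icc a b, |f'' x| ≤ M) {x : ℝ} (hx : x ∈ Icc a b) :
    |f x - (f a + f' a * (x - a))| ≤ M / 2 * (x - a) ^ 2 := by
  have hIci {g g' : ℝ → ℝ} (hg : ∀ x ∈ Icc a b, HasDerivWithinAt g (g' x) (Icc a b) x) :
      ∀ x ∈ Ico a b, HasDerivWithinAt g (g' x) (Ici x) x := fun x hx =>
    (hg x (Ico_subset_Icc_self hx)).mono_of_mem_nhdsWithin (Icc_mem_nhdsGE_of_mem hx)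
  have hf'_sub : ∀ x ∈ Icc a b, |f' x - f' a| ≤ M * (x - a) :=
    norm_image_sub_le_of_norm_deriv_right_le_segment
      (fun x hx => (hf' x hx).continuousWithinAt) (hIci hf')
      (fun x hx => hM x (Ico_subset_Icc_self hx))
  have htangent (x : ℝ) : HasDerivAt (fun x => f a + f' a * (x - a)) (f' a) x := by
    simpa using (((hasDerivAt_id x).sub_const a).const_mul (f' a)).const_add (f a)
  have hbarrier (x : ℝ) : HasDerivAt (fun x => M / 2 * (x - a) ^ 2) (M * (x - a)) x :=
    ((((hasDerivAt_id x).sub_const a).pow 2).const_mul (M / 2)).congr_deriv (by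
      simp only [Nat.cast_ofNat, id_eq, Nat.add_one_sub_one, pow_one, mul_one]; ring)
  refine image_norm_le_of_norm_deriv_right_le_deriv_boundary
    (f := fun x => f x - (f a + f' a * (x - a))) (f' := fun x => f' x - f' a)
    (B := fun x => M / 2 * (x - a) ^ 2) (B' := fun x => M * (x - a))
    (fun x hx => ((hf x hx).sub (htangent x).hasDerivWithinAt).continuousWithinAt)
    (fun x hx => (hIci hf x hx).sub (htangent x).hasDerivWithinAt) (by simp)
    hbarrier
    (fun x hx => hf'_sub x (Ico_subset_Icc_self hx)) hx

theorem IsBestAffineL2Approx.integral_mul_affine_eq_zero {f : ℝ → ℝ} {a b c₀ d₀ : ℝ}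
    (hbest : IsBestAffineL2Approx f (fun t => c₀ * t + d₀) a b) (hf : ContinuousOn f (uIcc a b))
    (c d : ℝ) : ∫ t in a..b, (f t - (c₀ * t + d₀)) * (c * t + d) = 0 := by
  set g := fun t => f t - (c₀ * t + d₀)
  set q := fun t : ℝ => c * t + d
  have hg : ContinuousOn g (uIcc a b) := hf.sub (by fun_prop)
  have hq : Continuous q := by fun_prop
  have expand (ε : ℝ) : ∫ t in a..b, (f t - ((c₀ + ε * c) * t + (d₀ + ε * d))) ^ 2 =
      (∫ t in a..b, g t ^ 2) - 2 * ε * (∫ t in a..b, g t * q t) +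
        ε ^ 2 * ∫ t in a..b, q t ^ 2 := by
    have hpoly (t : ℝ) : (f t - ((c₀ + ε * c) * t + (d₀ + ε * d))) ^ 2 =
        g t ^ 2 - 2 * ε * (g t * q t) + ε ^ 2 * q t ^ 2 := by
      simp only [g, q]; ring
    simp only [hpoly]
    rw [integral_add, integral_sub, integral_const_mul, integral_const_mul]
    · exact (hg.pow 2).intervalIntegrable
    · exact ((hg.mul hq.continuousOn).const_mul _).intervalIntegrable
    · exact ((hg.pow 2).sub ((hg.mul hq.continuousOn).const_mul _)).intervalIntegrable
    · exact ((hq.pow 2).const_mul _).intervalIntegrable _ _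
  have hdiscrim : discrim (∫ t in a..b, q t ^ 2) (-2 * ∫ t in a..b, g t * q t) 0 ≤ 0 :=
    discrim_le_zero fun ε => by
      have := hbest (c₀ + ε * c) (d₀ + ε * d)
      rw [expand] at this
      linarith
  rw [discrim] at hdiscrim
  exact pow_eq_zero_iff two_ne_zero |>.mp (by nlinarith [sq_nonneg (∫ t in a..b, g t * q t)])

theorem integral_affine_mul_four_sub_six_mul (c d : ℝ) :
    ∫ s in (0 : ℝ)..1, (c * s + d) * (4 - 6 * s) = d := by
  have hpoly (s : ℝ) : (c * s + d) * (4 - 6 * s) =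
      4 * d + (4 * c - 6 * d) * s ^ 1 - 6 * c * s ^ 2 := by
    ring
  simp (disch := exact Continuous.intervalIntegrable (by fun_prop) _ _) only [hpoly,
    integral_add, integral_sub, integral_const_mul, integral_pow, integral_const]
  norm_num
  ring

theorem integral_sq_mul_four_sub_six_mul_sq_add_one :
    ∫ s in (0 : ℝ)..1, s ^ 2 * ((4 - 6 * s) ^ 2 + 1) = 13 / 15 := by
  have hpoly (s : ℝ) : s ^ 2 * ((4 - 6 * s) ^ 2 + 1) = 17 * s ^ 2 - 48 * s ^ 3 + 36 * s ^ 4 := by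
    ring
  simp (disch := exact Continuous.intervalIntegrable (by fun_prop) _ _) only [hpoly,
    integral_add, integral_sub, integral_const_mul, integral_pow]
  norm_num

theorem abs_sub_le_of_isBestAffineL2Approx_unitInterval {φ φ' φ'' : ℝ → ℝ} {M c d : ℝ}
    (hφ : ∀ s ∈ Icc (0 : ℝ) 1, HasDerivWithinAt φ (φ' s) (Icc 0 1) s)
    (hφ' : ∀ s ∈ Icc (0 : ℝ) 1, HasDerivWithinAt φ' (φ'' s) (Icc 0 1) s)
    (hM : ∀ s ∈ Icc (0 : ℝ) 1, |φ'' s| ≤ M)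
    (hbest : IsBestAffineL2Approx φ (fun s => c * s + d) 0 1) :
    |d - φ 0| ≤ 13 / 60 * M := by
  set p := fun s => φ 0 + φ' 0 * s
  have htaylor (s : ℝ) (hs : s ∈ Icc (0 : ℝ) 1) : |φ s - p s| ≤ M / 2 * s ^ 2 := by
    simpa using abs_sub_tangent_le_of_abs_deriv2_le hφ hφ' hM hs
  have hφc : ContinuousOn φ (uIcc 0 1) := by
    rw [uIcc_of_le zero_le_one]
    exact fun s hs => (hφ s hs).continuousWithinAt
  have hrepr : d - φ 0 = ∫ s in (0 : ℝ)..1, (φ s - p s) * (4 - 6 * s) := by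
    have hsplit (s : ℝ) : (φ s - p s) * (4 - 6 * s) =
        (φ s - (c * s + d)) * (-6 * s + 4) + ((c - φ' 0) * s + (d - φ 0)) * (4 - 6 * s) := by
      simp only [p]; ring
    simp only [hsplit]
    rw [integral_add, hbest.integral_mul_affine_eq_zero hφc,
      integral_affine_mul_four_sub_six_mul, zero_add]
    · exact ((hφc.sub (by fun_prop)).mul (by fun_prop)).intervalIntegrable
    · exact Continuous.intervalIntegrable (by fun_prop) _ _
  have hbound (s : ℝ) (hs : s ∈ Ioc (0 : ℝ) 1) :
      ‖(φ s - p s) * (4 - 6 * s)‖ ≤ M / 4 * (s ^ 2 * ((4 - 6 * s) ^ 2 + 1)) := by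
    have hk : |4 - 6 * s| ≤ ((4 - 6 * s) ^ 2 + 1) / 2 := by
      nlinarith [sq_abs (4 - 6 * s), sq_nonneg (|4 - 6 * s| - 1)]
    rw [Real.norm_eq_abs, abs_mul]
    calc |φ s - p s| * |4 - 6 * s| ≤ M / 2 * s ^ 2 * (((4 - 6 * s) ^ 2 + 1) / 2) :=
          mul_le_mul (htaylor s (Ioc_subset_Icc_self hs)) hk (abs_nonneg _)
            ((abs_nonneg _).trans (htaylor s (Ioc_subset_Icc_self hs)))
      _ = M / 4 * (s ^ 2 * ((4 - 6 * s) ^ 2 + 1)) := by ring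
  calc |d - φ 0| = ‖∫ s in (0 : ℝ)..1, (φ s - p s) * (4 - 6 * s)‖ := by
        rw [hrepr, Real.norm_eq_abs]
    _ ≤ ∫ s in (0 : ℝ)..1, M / 4 * (s ^ 2 * ((4 - 6 * s) ^ 2 + 1)) :=
        norm_integral_le_of_norm_le zero_le_one (MeasureTheory.ae_of_all _ hbound)
          (Continuous.intervalIntegrable (by fun_prop) _ _)
    _ = 13 / 60 * M := by
        rw [integral_const_mul, integral_sq_mul_four_sub_six_mul_sq_add_one]
        ring

theorem IsBestAffineL2Approx.comp_add_mul {f : ℝ → ℝ} {a b α β κ c d : ℝ}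
    (hα : α ≠ 0) (hκ : 0 ≤ κ)
    (hcov : ∀ F : ℝ → ℝ, ∫ u in (0 : ℝ)..1, F (β + α * u) = κ * ∫ t in a..b, F t)
    (hbest : IsBestAffineL2Approx f (fun t => c * t + d) a b) :
    IsBestAffineL2Approx (fun u => f (β + α * u)) (fun u => c * α * u + (c * β + d)) 0 1 := by
  intro c' d'
  have hℓ (u : ℝ) : c * α * u + (c * β + d) = c * (β + α * u) + d := by ring
  have hq (u : ℝ) : c' * u + d' = c' / α * (β + α * u) + (d' - c' / α * β) := by
    field_simp; ring
  calc ∫ u in (0 : ℝ)..1, (f (β + α * u) - (c * α * u + (c * β + d))) ^ 2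
      = κ * ∫ t in a..b, (f t - (c * t + d)) ^ 2 := by
        simpa only [hℓ] using hcov fun t => (f t - (c * t + d)) ^ 2
    _ ≤ κ * ∫ t in a..b, (f t - (c' / α * t + (d' - c' / α * β))) ^ 2 :=
        mul_le_mul_of_nonneg_left (hbest _ _) hκ
    _ = ∫ u in (0 : ℝ)..1, (f (β + α * u) - (c' * u + d')) ^ 2 := by
        simpa only [hq] using
          (hcov fun t => (f t - (c' / α * t + (d' - c' / α * β))) ^ 2).symm

theorem abs_sub_le_of_isBestAffineL2Approx {f f' f'' : ℝ → ℝ} {s : Set ℝ}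
    {K a b α β κ c d : ℝ} (hf : ∀ x ∈ s, HasDerivWithinAt f (f' x) s x)
    (hf' : ∀ x ∈ s, HasDerivWithinAt f' (f'' x) s x) (hK : ∀ x ∈ s, |f'' x| ≤ K)
    (hα : α ≠ 0) (hκ : 0 ≤ κ) (hmaps : MapsTo (fun u => β + α * u) (Icc 0 1) s)
    (hcov : ∀ F : ℝ → ℝ, ∫ u in (0 : ℝ)..1, F (β + α * u) = κ * ∫ t in a..b, F t)
    (hbest : IsBestAffineL2Approx f (fun t => c * t + d) a b) :
    |c * β + d - f β| ≤ 13 / 60 * (K * α ^ 2) := by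
  have hσ (u : ℝ) : HasDerivAt (fun u => β + α * u) α u := by
    simpa using ((hasDerivAt_id u).const_mul α).const_add β
  simpa using abs_sub_le_of_isBestAffineL2Approx_unitInterval
    (φ' := fun u => f' (β + α * u) * α) (φ'' := fun u => f'' (β + α * u) * α * α)
    (fun u hu => (hf _ (hmaps hu)).comp u (hσ u).hasDerivWithinAt hmaps)
    (fun u hu => ((hf' _ (hmaps hu)).comp u (hσ u).hasDerivWithinAt hmaps).mul_const α)
    (fun u hu => by
      rw [mul_assoc, abs_mul, ← sq, abs_of_nonneg (sq_nonneg α)]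
      exact mul_le_mul_of_nonneg_right (hK _ (hmaps hu)) (sq_nonneg α))
    (hbest.comp_add_mul hα hκ hcov)

theorem jump_of_independent_best_segments_general
    (f f' f'' : ℝ → ℝ) (x₀ h K : ℝ) (hh : 0 < h)
    (hf' : ∀ x ∈ Set.Icc (x₀ - h) (x₀ + h),
      HasDerivWithinAt f (f' x) (Set.Icc (x₀ - h) (x₀ + h)) x)
    (hf'' : ∀ x ∈ Set.Icc (x₀ - h) (x₀ + h),
      HasDerivWithinAt f' (f'' x) (Set.Icc (x₀ - h) (x₀ + h)) x)
    (hK : ∀ x ∈ Set.Icc (x₀ - h) (x₀ + h), |f'' x| ≤ K)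
    (ℓm ℓp : ℝ → ℝ)
    (hℓm : ∃ c d : ℝ, ∀ t : ℝ, ℓm t = c * t + d)
    (hℓp : ∃ c d : ℝ, ∀ t : ℝ, ℓp t = c * t + d)
    (hmin_m : ∀ c d : ℝ,
      (∫ t in (x₀ - h)..x₀, (f t - ℓm t)^2) ≤ ∫ t in (x₀ - h)..x₀, (f t - (c * t + d))^2)
    (hmin_p : ∀ c d : ℝ,
      (∫ t in x₀..(x₀ + h), (f t - ℓp t)^2) ≤ ∫ t in x₀..(x₀ + h), (f t - (c * t + d))^2) :
    |ℓm x₀ - ℓp x₀| ≤ K * h^2 / 2 := by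
  obtain ⟨cm, dm, hℓm⟩ := hℓm
  obtain ⟨cp, dp, hℓp⟩ := hℓp
  obtain rfl : ℓm = fun t => cm * t + dm := funext hℓm
  obtain rfl : ℓp = fun t => cp * t + dp := funext hℓp
  have hmaps (α : ℝ) (hα : |α| ≤ h) :
      MapsTo (fun u => x₀ + α * u) (Icc 0 1) (Icc (x₀ - h) (x₀ + h)) := fun u hu => by
    have : |α * u| ≤ h := by
      rw [abs_mul, abs_of_nonneg hu.1]; nlinarith [abs_nonneg α, hu.2]
    constructor <;> linarith [abs_le.mp this]
  have hminus : |cm * x₀ + dm - f x₀| ≤ 13 / 60 * (K * (-h) ^ 2) :=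
    abs_sub_le_of_isBestAffineL2Approx hf' hf'' hK (neg_ne_zero.mpr hh.ne')
      (inv_nonneg.mpr hh.le)
      (hmaps (-h) (by rw [abs_neg, abs_of_pos hh]))
      (fun F => by
        rw [integral_comp_add_mul F (neg_ne_zero.mpr hh.ne'), integral_symm]
        simp [sub_eq_add_neg])
      hmin_m
  have hplus : |cp * x₀ + dp - f x₀| ≤ 13 / 60 * (K * h ^ 2) :=
    abs_sub_le_of_isBestAffineL2Approx hf' hf'' hK hh.ne' (inv_nonneg.mpr hh.le)
      (hmaps h (abs_of_pos hh).le)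
      (fun F => by simp [integral_comp_add_mul F hh.ne']) hmin_p
  have hK0 : 0 ≤ K * h ^ 2 :=
    mul_nonneg ((abs_nonneg _).trans (hK x₀ ⟨by linarith, by linarith⟩)) (sq_nonneg h)
  rw [neg_sq] at hminus
  calc |cm * x₀ + dm - (cp * x₀ + dp)|
      = |(cm * x₀ + dm - f x₀) - (cp * x₀ + dp - f x₀)| := by ring_nf
    _ ≤ |cm * x₀ + dm - f x₀| + |cp * x₀ + dp - f x₀| := abs_sub _ _
    _ ≤ K * h ^ 2 / 2 := by linarith

/-- the jump at the common knot between the two independently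
L²-optimal affine approximations is at most K·h²/2. -/
theorem jump_of_independent_best_segments
    (f f' f'' : ℝ → ℝ) (x₀ h K : ℝ) (hh : 0 < h)
    (hf' : ∀ x ∈ Set.Icc (x₀ - h) (x₀ + h),
      HasDerivWithinAt f (f' x) (Set.Icc (x₀ - h) (x₀ + h)) x)
    (hf'' : ∀ x ∈ Set.Icc (x₀ - h) (x₀ + h),
      HasDerivWithinAt f' (f'' x) (Set.Icc (x₀ - h) (x₀ + h)) x)
    (hf''c : ContinuousOn f'' (Set.Icc (x₀ - h) (x₀ + h)))
    (hK : ∀ x ∈ Set.Icc (x₀ - h) (x₀ + h), |f'' x| ≤ K)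
    (ℓm ℓp : ℝ → ℝ)
    (hℓm : ∃ c d : ℝ, ∀ t : ℝ, ℓm t = c * t + d)
    (hℓp : ∃ c d : ℝ, ∀ t : ℝ, ℓp t = c * t + d)
    (hmin_m : ∀ c d : ℝ,
      (∫ t in (x₀ - h)..x₀, (f t - ℓm t)^2) ≤ ∫ t in (x₀ - h)..x₀, (f t - (c * t + d))^2)
    (hmin_p : ∀ c d : ℝ,
      (∫ t in x₀..(x₀ + h), (f t - ℓp t)^2) ≤ ∫ t in x₀..(x₀ + h), (f t - (c * t + d))^2) :
    |ℓm x₀ - ℓp x₀| ≤ K * h^2 / 2 :=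
  jump_of_independent_best_segments_general f f' f'' x₀ h K hh hf' hf'' hK ℓm ℓp hℓm hℓp hmin_m
    hmin_p
end

section
/- Let f be C² on [x₀, x₁], h = x₁ − x₀, t(x) = (x − x₀)/h, and π f the linear interpolant of f. Then there exist η₀, η₁ ∈ (x₀, x₁) such that ∫_{x₀}^{x₁} (f(x) − π f(x))·(1 − t(x)) dx = −(h³/24)·f''(η₀) and ∫_{x₀}^{x₁} (f(x) − π f(x))·t(x) dx = −(h³/24)·f''(η₁). -/
/-!
Since `π f` is affine and agrees with `f` at the endpoints, `e = f - π f` vanishes at `x₀, x₁`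
and `e'' = f''`. For each weight `w` take the cubic `G` with `G'' = w` and `G(x₀) = G(x₁) = 0`
(its Peano kernel); two integrations by parts give `∫ e w = ∫ f'' G`. The kernel has no zero in
`(x₀, x₁)`, so the first mean value theorem for integrals yields an interior `η` with
`∫ f'' G = f''(η) ∫ G`, and `∫ G = -h³/24` for both weights.
-/

open MeasureTheory Set intervalIntegral

open scoped Interval

theorem IsPreconnected.forall_lt_or_forall_gt {X α : Type*} [TopologicalSpace X] [LinearOrder α]
    [TopologicalSpace α] [OrderClosedTopology α] {s : Set X} (hs : IsPreconnected s) {g : X → α}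
    (hg : ContinuousOn g s) {r : α} (hr : ∀ x ∈ s, g x ≠ r) :
    (∀ x ∈ s, g x < r) ∨ (∀ x ∈ s, r < g x) := by
  by_contra! h
  obtain ⟨⟨y, hy, hry⟩, z, hz, hzr⟩ := h
  obtain ⟨x, hx, hxr⟩ := hs.intermediate_value hz hy hg ⟨hzr, hry⟩
  exact hr x hx hxr

theorem intervalIntegral_ne_zero_of_ne_zero_on_Ioo {a b : ℝ} {g : ℝ → ℝ} (hab : a < b)
    (hg : ContinuousOn g (Icc a b)) (hg0 : ∀ x ∈ Ioo a b, g x ≠ 0) :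
    ∫ x in a..b, g x ≠ 0 := by
  have hint : IntervalIntegrable g volume a b := hg.intervalIntegrable_of_Icc hab.le
  rcases isPreconnected_Ioo.forall_lt_or_forall_gt (hg.mono Ioo_subset_Icc_self) hg0
    with hneg | hpos
  · have := intervalIntegral_pos_of_pos_on hint.neg (fun x hx => neg_pos.2 (hneg x hx)) hab
    simp only [Pi.neg_apply, intervalIntegral.integral_neg] at this
    exact (neg_pos.1 this).ne
  · exact (intervalIntegral_pos_of_pos_on hint hpos hab).ne'

theorem exists_mem_Ioo_intervalIntegral_mul_eq_of_ne_zero {a b : ℝ} {g w : ℝ → ℝ} (hab : a < b)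
    (hg : ContinuousOn g (Icc a b)) (hw : ContinuousOn w (Icc a b))
    (hw0 : ∀ x ∈ Ioo a b, w x ≠ 0) :
    ∃ η ∈ Ioo a b, ∫ x in a..b, g x * w x = g η * ∫ x in a..b, w x := by
  have hJ := intervalIntegral_ne_zero_of_ne_zero_on_Ioo hab hw hw0
  set r := (∫ x in a..b, g x * w x) / ∫ x in a..b, w x
  suffices ∃ η ∈ Ioo a b, g η = r by
    obtain ⟨η, hη, hgη⟩ := this
    exact ⟨η, hη, by rw [hgη, div_mul_cancel₀ _ hJ]⟩
  by_contra! hr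
  have hzero : ∫ x in a..b, (g x - r) * w x = 0 := by
    have hgw : IntervalIntegrable (fun x => g x * w x) volume a b :=
      (hg.mul hw).intervalIntegrable_of_Icc hab.le
    simp_rw [sub_mul]
    rw [integral_sub hgw ((hw.intervalIntegrable_of_Icc hab.le).const_mul r),
      intervalIntegral.integral_const_mul, div_mul_cancel₀ _ hJ, sub_self]
  exact intervalIntegral_ne_zero_of_ne_zero_on_Ioo hab ((hg.sub continuousOn_const).mul hw)
    (fun x hx => mul_ne_zero (sub_ne_zero.2 (hr x hx)) (hw0 x hx)) hzero

theorem intervalIntegral_mul_deriv2_eq_deriv2_mul {a b : ℝ} {u u' u'' v v' v'' : ℝ → ℝ}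
    (hu : ∀ x ∈ [[a, b]], HasDerivWithinAt u (u' x) [[a, b]] x)
    (hu' : ∀ x ∈ [[a, b]], HasDerivWithinAt u' (u'' x) [[a, b]] x)
    (hv : ∀ x ∈ [[a, b]], HasDerivWithinAt v (v' x) [[a, b]] x)
    (hv' : ∀ x ∈ [[a, b]], HasDerivWithinAt v' (v'' x) [[a, b]] x)
    (hu'' : IntervalIntegrable u'' volume a b) (hv'' : IntervalIntegrable v'' volume a b)
    (hua : u a = 0) (hub : u b = 0) (hva : v a = 0) (hvb : v b = 0) :
    ∫ x in a..b, u x * v'' x = ∫ x in a..b, u'' x * v x := by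
  have hu'i : IntervalIntegrable u' volume a b :=
    ContinuousOn.intervalIntegrable fun x hx => (hu' x hx).continuousWithinAt
  have hv'i : IntervalIntegrable v' volume a b :=
    ContinuousOn.intervalIntegrable fun x hx => (hv' x hx).continuousWithinAt
  calc ∫ x in a..b, u x * v'' x = -∫ x in a..b, u' x * v' x := by
        rw [integral_mul_deriv_eq_deriv_mul_of_hasDerivWithinAt hu hv' hu'i hv'', hua, hub]
        ring
    _ = ∫ x in a..b, v x * u'' x := by
        rw [integral_mul_deriv_eq_deriv_mul_of_hasDerivWithinAt hv hu' hv'i hu'', hva, hvb]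
        simp_rw [mul_comm (v' _)]
        ring
    _ = ∫ x in a..b, u'' x * v x := by simp_rw [mul_comm (v _)]

theorem exists_mem_Ioo_intervalIntegral_mul_eq_deriv2_mul_integral {a b : ℝ}
    {u u' u'' G G' w : ℝ → ℝ} (hab : a < b)
    (hu : ∀ x ∈ Icc a b, HasDerivWithinAt u (u' x) (Icc a b) x)
    (hu' : ∀ x ∈ Icc a b, HasDerivWithinAt u' (u'' x) (Icc a b) x)
    (hu'' : ContinuousOn u'' (Icc a b)) (hua : u a = 0) (hub : u b = 0)
    (hG : ∀ x, HasDerivAt G (G' x) x) (hG' : ∀ x, HasDerivAt G' (w x) x) (hw : Continuous w)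
    (hGa : G a = 0) (hGb : G b = 0) (hG0 : ∀ x ∈ Ioo a b, G x ≠ 0) :
    ∃ η ∈ Ioo a b, ∫ x in a..b, u x * w x = u'' η * ∫ x in a..b, G x := by
  have hGc : Continuous G := continuous_iff_continuousAt.2 fun x => (hG x).continuousAt
  rw [← uIcc_of_le hab.le] at hu hu'
  rw [intervalIntegral_mul_deriv2_eq_deriv2_mul hu hu' (fun x _ => (hG x).hasDerivWithinAt)
    (fun x _ => (hG' x).hasDerivWithinAt) (hu''.intervalIntegrable_of_Icc hab.le)
    (hw.intervalIntegrable _ _) hua hub hGa hGb]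
  exact exists_mem_Ioo_intervalIntegral_mul_eq_of_ne_zero hab hu'' hGc.continuousOn hG0

theorem integral_cubic_sub (x₀ x₁ a b c : ℝ) :
    ∫ x in x₀..x₁, (a * (x - x₀) ^ 3 + b * (x - x₀) ^ 2 + c * (x - x₀)) =
      a * (x₁ - x₀) ^ 4 / 4 + b * (x₁ - x₀) ^ 3 / 3 + c * (x₁ - x₀) ^ 2 / 2 := by
  have hint (f : ℝ → ℝ) (hf : Continuous f) : IntervalIntegrable f volume 0 (x₁ - x₀) :=
    hf.intervalIntegrable _ _
  rw [intervalIntegral.integral_comp_sub_right (fun s => a * s ^ 3 + b * s ^ 2 + c * s), sub_self,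
    integral_add (hint _ (by fun_prop)) (hint _ (by fun_prop)),
    integral_add (hint _ (by fun_prop)) (hint _ (by fun_prop))]
  rw [intervalIntegral.integral_const_mul, intervalIntegral.integral_const_mul,
    intervalIntegral.integral_const_mul, integral_pow, integral_pow, integral_id]
  ring

noncomputable def peanoKernel₀ (x₀ x₁ x : ℝ) : ℝ :=
  (x - x₀) * (x - x₁) * (2 * x₁ - x₀ - x) / (6 * (x₁ - x₀))

noncomputable def peanoKernel₁ (x₀ x₁ x : ℝ) : ℝ :=
  (x - x₀) * (x - x₁) * (x + x₁ - 2 * x₀) / (6 * (x₁ - x₀))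

section PeanoKernels

variable {x₀ x₁ : ℝ}

theorem hasDerivAt_peanoKernel₀ (x : ℝ) : HasDerivAt (peanoKernel₀ x₀ x₁)
    (-(3 * (x - x₀) ^ 2 - 6 * (x₁ - x₀) * (x - x₀) + 2 * (x₁ - x₀) ^ 2) / (6 * (x₁ - x₀))) x := by
  refine ((((hasDerivAt_id' x).sub_const x₀).mul ((hasDerivAt_id' x).sub_const x₁)).mul
    ((hasDerivAt_id' x).const_sub (2 * x₁ - x₀))).div_const (6 * (x₁ - x₀)) |>.congr_deriv ?_
  simp only [Pi.mul_apply]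
  ring

theorem hasDerivAt_peanoKernel₁ (x : ℝ) : HasDerivAt (peanoKernel₁ x₀ x₁)
    ((3 * (x - x₀) ^ 2 - (x₁ - x₀) ^ 2) / (6 * (x₁ - x₀))) x := by
  refine ((((hasDerivAt_id' x).sub_const x₀).mul ((hasDerivAt_id' x).sub_const x₁)).mul
    (((hasDerivAt_id' x).add_const x₁).sub_const (2 * x₀))).div_const (6 * (x₁ - x₀))
    |>.congr_deriv ?_
  simp only [Pi.mul_apply]
  ring

theorem hasDerivAt_deriv_peanoKernel₀ (h : x₀ ≠ x₁) (x : ℝ) : HasDerivAt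
    (fun x => -(3 * (x - x₀) ^ 2 - 6 * (x₁ - x₀) * (x - x₀) + 2 * (x₁ - x₀) ^ 2) / (6 * (x₁ - x₀)))
    (1 - (x - x₀) / (x₁ - x₀)) x := by
  have hs := (hasDerivAt_id' x).sub_const x₀
  refine ((((hs.pow 2).const_mul 3).sub (hs.const_mul (6 * (x₁ - x₀)))).add_const
    (2 * (x₁ - x₀) ^ 2)).neg.div_const (6 * (x₁ - x₀)) |>.congr_deriv ?_
  field_simp [sub_ne_zero.2 h.symm]
  ring

theorem hasDerivAt_deriv_peanoKernel₁ (x : ℝ) : HasDerivAt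
    (fun x => (3 * (x - x₀) ^ 2 - (x₁ - x₀) ^ 2) / (6 * (x₁ - x₀))) ((x - x₀) / (x₁ - x₀)) x := by
  have hs := (hasDerivAt_id' x).sub_const x₀
  refine (((hs.pow 2).const_mul 3).sub_const ((x₁ - x₀) ^ 2)).div_const (6 * (x₁ - x₀))
    |>.congr_deriv ?_
  rw [← mul_div_mul_left (x - x₀) (x₁ - x₀) (by norm_num : (6 : ℝ) ≠ 0)]
  ring

theorem peanoKernel₀_ne_zero {x : ℝ} (hx : x ∈ Ioo x₀ x₁) : peanoKernel₀ x₀ x₁ x ≠ 0 := by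
  obtain ⟨h₀, h₁⟩ := hx
  have : 0 < 2 * x₁ - x₀ - x := by linarith
  exact div_ne_zero (mul_ne_zero (mul_ne_zero (sub_ne_zero.2 h₀.ne') (sub_ne_zero.2 h₁.ne))
    this.ne') (by linarith)

theorem peanoKernel₁_ne_zero {x : ℝ} (hx : x ∈ Ioo x₀ x₁) : peanoKernel₁ x₀ x₁ x ≠ 0 := by
  obtain ⟨h₀, h₁⟩ := hx
  have : 0 < x + x₁ - 2 * x₀ := by linarith
  exact div_ne_zero (mul_ne_zero (mul_ne_zero (sub_ne_zero.2 h₀.ne') (sub_ne_zero.2 h₁.ne))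
    this.ne') (by linarith)

theorem integral_peanoKernel₀ (h : x₀ ≠ x₁) :
    ∫ x in x₀..x₁, peanoKernel₀ x₀ x₁ x = -((x₁ - x₀) ^ 3 / 24) := by
  have hh : x₁ - x₀ ≠ 0 := sub_ne_zero.2 h.symm
  have hK : peanoKernel₀ x₀ x₁ = fun x => -(1 / (6 * (x₁ - x₀))) * (x - x₀) ^ 3 +
      1 / 2 * (x - x₀) ^ 2 + -((x₁ - x₀) / 3) * (x - x₀) := by
    ext x
    simp only [peanoKernel₀]
    field_simp
    ring
  rw [hK, integral_cubic_sub]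
  field_simp
  ring

theorem integral_peanoKernel₁ (h : x₀ ≠ x₁) :
    ∫ x in x₀..x₁, peanoKernel₁ x₀ x₁ x = -((x₁ - x₀) ^ 3 / 24) := by
  have hh : x₁ - x₀ ≠ 0 := sub_ne_zero.2 h.symm
  have hK : peanoKernel₁ x₀ x₁ = fun x => 1 / (6 * (x₁ - x₀)) * (x - x₀) ^ 3 +
      0 * (x - x₀) ^ 2 + -((x₁ - x₀) / 6) * (x - x₀) := by
    ext x
    simp only [peanoKernel₁]
    field_simp
    ring
  rw [hK, integral_cubic_sub]
  field_simp
  ring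

end PeanoKernels

/-- weighted integrals of the interpolation error against the two
affine weights 1 - t(x) and t(x) equal -(h³/24)·f''(η₀) and -(h³/24)·f''(η₁). -/
theorem interpolation_error_weighted_integrals
    (f f' f'' : ℝ → ℝ) (x₀ x₁ : ℝ) (hx : x₀ < x₁)
    (hf' : ∀ x ∈ Set.Icc x₀ x₁, HasDerivWithinAt f (f' x) (Set.Icc x₀ x₁) x)
    (hf'' : ∀ x ∈ Set.Icc x₀ x₁, HasDerivWithinAt f' (f'' x) (Set.Icc x₀ x₁) x)
    (hf''c : ContinuousOn f'' (Set.Icc x₀ x₁))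
    (p : ℝ → ℝ) (hpaff : ∃ c d : ℝ, ∀ t : ℝ, p t = c * t + d)
    (hp0 : p x₀ = f x₀) (hp1 : p x₁ = f x₁) :
    ∃ η₀ ∈ Set.Ioo x₀ x₁, ∃ η₁ ∈ Set.Ioo x₀ x₁,
      (∫ x in x₀..x₁, (f x - p x) * (1 - (x - x₀) / (x₁ - x₀)))
        = -((x₁ - x₀)^3 / 24) * f'' η₀ ∧
      (∫ x in x₀..x₁, (f x - p x) * ((x - x₀) / (x₁ - x₀)))
        = -((x₁ - x₀)^3 / 24) * f'' η₁ := by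
  obtain ⟨c, d, hp⟩ := hpaff
  have hpc : ∀ x, HasDerivAt p c x := fun x => by
    rw [funext hp]
    simpa using ((hasDerivAt_id x).const_mul c).add_const d
  have he : ∀ x ∈ Icc x₀ x₁, HasDerivWithinAt (fun x => f x - p x) (f' x - c) (Icc x₀ x₁) x :=
    fun x hx => (hf' x hx).sub (hpc x).hasDerivWithinAt
  have he' : ∀ x ∈ Icc x₀ x₁, HasDerivWithinAt (fun x => f' x - c) (f'' x) (Icc x₀ x₁) x :=
    fun x hx => (hf'' x hx).sub_const c
  have he₀ : f x₀ - p x₀ = 0 := by rw [hp0, sub_self]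
  have he₁ : f x₁ - p x₁ = 0 := by rw [hp1, sub_self]
  obtain ⟨η₀, hη₀, h₀⟩ := exists_mem_Ioo_intervalIntegral_mul_eq_deriv2_mul_integral hx he he'
    hf''c he₀ he₁ hasDerivAt_peanoKernel₀ (hasDerivAt_deriv_peanoKernel₀ hx.ne) (by fun_prop)
    (by simp [peanoKernel₀]) (by simp [peanoKernel₀]) fun _ => peanoKernel₀_ne_zero
  obtain ⟨η₁, hη₁, h₁⟩ := exists_mem_Ioo_intervalIntegral_mul_eq_deriv2_mul_integral hx he he'
    hf''c he₀ he₁ hasDerivAt_peanoKernel₁ hasDerivAt_deriv_peanoKernel₁ (by fun_prop)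
    (by simp [peanoKernel₁]) (by simp [peanoKernel₁]) fun _ => peanoKernel₁_ne_zero
  refine ⟨η₀, hη₀, η₁, hη₁, ?_, ?_⟩
  · rw [h₀, integral_peanoKernel₀ hx.ne, mul_comm]
  · rw [h₁, integral_peanoKernel₁ hx.ne, mul_comm]
end
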